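/- Let P be a maximal ranked poset of rank n and let J ⊆ K be nonempty distinct poset ideals of P such that J, K, and K ∖ J are each connected in P, and suppose |max(J)| = 1 and |max(K)| ≥ 2, with max(J) ⊆ P_j and max(K) ⊆ P_k where j ≤ k and k − j ≠ 1. Then k ≥ 1, the sets P_{k−1}, max(J), max(K) are pairwise distinct antichains, and the triple {P_{k−1}, max(J), max(K)} belongs to Δ*_C(P). -/

import Mathlib

open Finset
open scoped Classical

variable (P : Type*) [Fintype P] [PartialOrder P]

/-- The comparability graph of a poset. -/
def compGraph : SimpleGraph P where
  Adj x y := x ≠ y ∧ (x ≤ y ∨ y ≤ x)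
  symm := ⟨fun _ _ h => ⟨h.1.symm, h.2.symm⟩⟩
  loopless := ⟨fun _ h => h.1 rfl⟩

/-- A subset `W` of `P` is connected in `P` if the subgraph of the comparability
graph induced on `W` is connected (this includes `W` being nonempty). -/
def ConnIn (W : Set P) : Prop :=
  (SimpleGraph.induce W (compGraph P)).Connected

/-- A poset ideal (down-set). -/
def IsIdealF (I : Finset P) : Prop :=
  ∀ ⦃x y : P⦄, x ∈ I → y ≤ x → y ∈ I

/-- An antichain of the poset. -/
def IsAntichainF (A : Finset P) : Prop :=
  IsAntichain (· ≤ ·) (↑A : Set P)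

/-- The 0/1 indicator vector of a subset of `P`. -/
noncomputable def rho (W : Finset P) : P → ℝ :=
  fun x => if x ∈ W then 1 else 0

/-- The order polytope of `P`. -/
def orderPolytope : Set (P → ℝ) :=
  {f | (∀ x, 0 ≤ f x ∧ f x ≤ 1) ∧ ∀ ⦃x y : P⦄, x ≤ y → f y ≤ f x}

/-- The chain polytope of `P`. -/
def chainPolytope : Set (P → ℝ) :=
  {f | (∀ x, 0 ≤ f x) ∧ ∀ s : Finset P, IsChain (· ≤ ·) (↑s : Set P) → ∑ x ∈ s, f x ≤ 1}

/-- `conv {u, v}` is an edge (1-dimensional exposed face) of the polytope `S`. -/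
def IsEdgeOf (S : Set (P → ℝ)) (u v : P → ℝ) : Prop :=
  u ≠ v ∧ IsExposed ℝ S (convexHull ℝ {u, v})

/-- `conv {u, v, w}` is a triangular 2-face of the polytope `S`. -/
def IsTriFaceOf (S : Set (P → ℝ)) (u v w : P → ℝ) : Prop :=
  u ≠ v ∧ u ≠ w ∧ v ≠ w ∧ IsExposed ℝ S (convexHull ℝ {u, v, w})

/-- The set of maximal elements of a subset of `P`. -/
noncomputable def maxSet (W : Finset P) : Finset P :=
  W.filter (fun x => ∀ y ∈ W, ¬ x < y)

/-- The set of minimal elements of a subset of `P`. -/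
noncomputable def minSet (W : Finset P) : Finset P :=
  W.filter (fun x => ∀ y ∈ W, ¬ y < x)

/-- The poset ideal generated by a subset of `P`. -/
noncomputable def genIdeal (A : Finset P) : Finset P :=
  univ.filter (fun x => ∃ a ∈ A, x ≤ a)

/-- The pair `{I, J}` belongs to `E*_O(P)`. -/
noncomputable def EstarO (I J : Finset P) : Prop :=
  IsIdealF P I ∧ IsIdealF P J ∧ I ≠ J ∧
    IsEdgeOf P (orderPolytope P) (rho P I) (rho P J) ∧
    ¬ IsEdgeOf P (chainPolytope P) (rho P (maxSet P I)) (rho P (maxSet P J))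

/-- The pair `{A, B}` belongs to `E*_C(P)`. -/
noncomputable def EstarC (A B : Finset P) : Prop :=
  IsAntichainF P A ∧ IsAntichainF P B ∧ A ≠ B ∧
    IsEdgeOf P (chainPolytope P) (rho P A) (rho P B) ∧
    ¬ IsEdgeOf P (orderPolytope P) (rho P (genIdeal P A)) (rho P (genIdeal P B))

/-- `Δ_O(P)`: unordered triples of pairwise distinct poset ideals spanning a
triangular 2-face of the order polytope. -/
def DeltaO : Set (Finset (Finset P)) :=
  {T | ∃ I J K : Finset P, T = {I, J, K} ∧ I ≠ J ∧ I ≠ K ∧ J ≠ K ∧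
    IsIdealF P I ∧ IsIdealF P J ∧ IsIdealF P K ∧
    IsTriFaceOf P (orderPolytope P) (rho P I) (rho P J) (rho P K)}

/-- `Δ_C(P)`: unordered triples of pairwise distinct antichains spanning a
triangular 2-face of the chain polytope. -/
def DeltaC : Set (Finset (Finset P)) :=
  {T | ∃ A B C : Finset P, T = {A, B, C} ∧ A ≠ B ∧ A ≠ C ∧ B ≠ C ∧
    IsAntichainF P A ∧ IsAntichainF P B ∧ IsAntichainF P C ∧
    IsTriFaceOf P (chainPolytope P) (rho P A) (rho P B) (rho P C)}

/-- `Δ*_O(P)`: triples in `Δ_O(P)` at least one of whose pairs lies in `E*_O(P)`. -/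
def DeltaStarO : Set (Finset (Finset P)) :=
  {T | T ∈ DeltaO P ∧ ∃ I ∈ T, ∃ J ∈ T, I ≠ J ∧ EstarO P I J}

/-- `Δ*_C(P)`: triples in `Δ_C(P)` at least one of whose pairs lies in `E*_C(P)`. -/
def DeltaStarC : Set (Finset (Finset P)) :=
  {T | T ∈ DeltaC P ∧ ∃ A ∈ T, ∃ B ∈ T, A ≠ B ∧ EstarC P A B}

/-- `r` is a rank function exhibiting `P` as a maximal ranked poset of rank `n`:
`r` is surjective onto `{0, …, n}` and `x < y ↔ r x < r y`. -/
def IsMaxRanked (r : P → ℕ) (n : ℕ) : Prop :=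
  (∀ x, r x ≤ n) ∧ (∀ i, i ≤ n → ∃ x, r x = i) ∧ (∀ x y : P, x < y ↔ r x < r y)

/-- The rank level `P_i`. -/
noncomputable def level (r : P → ℕ) (i : ℕ) : Finset P :=
  univ.filter (fun x => r x = i)

/-- `P` contains an `X`-poset as a subposet. -/
def ContainsX : Prop :=
  ∃ a b c d e : P,
    a ≠ b ∧ a ≠ c ∧ a ≠ d ∧ a ≠ e ∧ b ≠ c ∧ b ≠ d ∧ b ≠ e ∧ c ≠ d ∧ c ≠ e ∧ d ≠ e ∧
    a < c ∧ b < c ∧ c < d ∧ c < e ∧ ¬ a ≤ b ∧ ¬ b ≤ a ∧ ¬ d ≤ e ∧ ¬ e ≤ d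

section Aux

set_option linter.unusedSectionVars false

variable {P}
variable {r : P → ℕ} {n : ℕ}

lemma rho_inj {A B : Finset P} (h : rho P A = rho P B) : A = B := by
  ext x
  have hx := congrFun h x
  simp only [rho] at hx
  by_cases h1 : x ∈ A <;> by_cases h2 : x ∈ B <;> simp_all

lemma rank_mono (hr : IsMaxRanked P r n) {x y : P} (h : x ≤ y) : r x ≤ r y := by
  rcases eq_or_lt_of_le h with rfl | hlt
  · exact le_rfl
  · exact le_of_lt ((hr.2.2 x y).mp hlt)

lemma lt_of_rank_lt (hr : IsMaxRanked P r n) {x y : P} (h : r x < r y) : x < y :=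
  (hr.2.2 x y).mpr h

lemma not_le_of_rank_eq (hr : IsMaxRanked P r n) {x y : P} (he : r x = r y) (hne : x ≠ y) :
    ¬ x ≤ y := fun h => by
  have := (hr.2.2 x y).mp (lt_of_le_of_ne h hne); omega

lemma mem_level {i : ℕ} {x : P} : x ∈ level P r i ↔ r x = i := by simp [level]

lemma level_nonempty (hr : IsMaxRanked P r n) {i : ℕ} (hi : i ≤ n) :
    (level P r i).Nonempty := by
  obtain ⟨x, hx⟩ := hr.2.1 i hi
  exact ⟨x, mem_level.mpr hx⟩

lemma antichain_level (hr : IsMaxRanked P r n) (i : ℕ) : IsAntichainF P (level P r i) := by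
  intro x hx y hy hxy hle
  rw [Finset.mem_coe, mem_level] at hx hy
  exact not_le_of_rank_eq hr (hx.trans hy.symm) hxy hle

lemma antichain_maxSet (W : Finset P) : IsAntichainF P (maxSet P W) := by
  intro x hx y hy hxy hle
  rw [Finset.mem_coe] at hx hy
  simp only [maxSet, Finset.mem_filter] at hx hy
  exact hx.2 y hy.1 (lt_of_le_of_ne hle hxy)

lemma maxSet_subset (W : Finset P) : maxSet P W ⊆ W := Finset.filter_subset _ _

lemma exists_le_maxSet {W : Finset P} {x : P} (hx : x ∈ W) : ∃ m ∈ maxSet P W, x ≤ m := by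
  obtain ⟨b, hxb, hb⟩ := W.exists_le_maximal hx
  refine ⟨b, ?_, hxb⟩
  simp only [maxSet, Finset.mem_filter]
  exact ⟨hb.1, fun y hy hlt => absurd (hb.2 hy hlt.le) (not_le_of_gt hlt)⟩

lemma conn_eq_of_antichain {W : Finset P} (hc : ConnIn P (↑W : Set P))
    (h : ∀ x ∈ W, ∀ y ∈ W, x ≠ y → ¬ x ≤ y) : ∀ x ∈ W, ∀ y ∈ W, x = y := by
  have key : ∀ (a b : (↑W : Set P)), (SimpleGraph.induce (↑W : Set P) (compGraph P)).Walk a b →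
      a = b := by
    intro a b w
    induction w with
    | nil => rfl
    | @cons x y z hadj _ ih =>
      exfalso
      have hadj' : compGraph P |>.Adj x.val y.val := hadj
      have hxW : x.val ∈ W := Finset.mem_coe.mp x.property
      have hyW : y.val ∈ W := Finset.mem_coe.mp y.property
      rcases hadj'.2 with hle | hle
      · exact h _ hxW _ hyW hadj'.1 hle
      · exact h _ hyW _ hxW hadj'.1.symm hle
  intro x hx y hy
  obtain ⟨w⟩ := hc.preconnected ⟨x, Finset.mem_coe.mpr hx⟩ ⟨y, Finset.mem_coe.mpr hy⟩
  exact Subtype.ext_iff.mp (key _ _ w)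

lemma ideal_struct (hr : IsMaxRanked P r n) {K : Finset P} (hK : IsIdealF P K)
    (hKne : (maxSet P K).Nonempty) {k : ℕ} (hk : maxSet P K ⊆ level P r k) :
    ∀ x, x ∈ K ↔ (r x < k ∨ x ∈ maxSet P K) := by
  intro x
  constructor
  · intro hx
    obtain ⟨m, hm, hxm⟩ := exists_le_maxSet hx
    have hrm : r m = k := mem_level.mp (hk hm)
    rcases eq_or_lt_of_le hxm with rfl | hlt
    · exact Or.inr hm
    · exact Or.inl (hrm ▸ (hr.2.2 x m).mp hlt)
  · rintro (hx | hx)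
    · obtain ⟨m, hm⟩ := hKne
      have hrm : r m = k := mem_level.mp (hk hm)
      exact hK (maxSet_subset _ hm) (lt_of_rank_lt hr (by omega)).le
    · exact maxSet_subset _ hx

lemma genIdeal_isIdeal (A : Finset P) : IsIdealF P (genIdeal P A) := by
  intro x y hx hyx
  simp only [genIdeal, Finset.mem_filter, Finset.mem_univ, true_and] at hx ⊢
  obtain ⟨a, ha, hxa⟩ := hx
  exact ⟨a, ha, hyx.trans hxa⟩

lemma genIdeal_level (hr : IsMaxRanked P r n) {i : ℕ} (hi : i ≤ n) :
    genIdeal P (level P r i) = univ.filter (fun x => r x ≤ i) := by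
  ext x
  simp only [genIdeal, Finset.mem_filter, Finset.mem_univ, true_and, mem_level]
  constructor
  · rintro ⟨a, ha, hxa⟩
    exact ha ▸ rank_mono hr hxa
  · intro hx
    obtain ⟨a, ha⟩ := hr.2.1 i hi
    rcases eq_or_lt_of_le hx with he | hlt
    · exact ⟨x, he, le_rfl⟩
    · exact ⟨a, mem_level.mp (mem_level.mpr ha), (lt_of_rank_lt hr (by omega)).le⟩

lemma genIdeal_maxSet {K : Finset P} (hK : IsIdealF P K) : genIdeal P (maxSet P K) = K := by
  ext x
  simp only [genIdeal, Finset.mem_filter, Finset.mem_univ, true_and]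
  constructor
  · rintro ⟨a, ha, hxa⟩
    exact hK (maxSet_subset _ ha) hxa
  · intro hx
    obtain ⟨m, hm, hxm⟩ := exists_le_maxSet hx
    exact ⟨m, hm, hxm⟩

end Aux

section Aux2

set_option linter.unusedSectionVars false

variable {P}
variable {r : P → ℕ} {n : ℕ}

lemma chainPolytope_convex : Convex ℝ (chainPolytope P) := by
  intro f hf g hg a b ha hb hab
  refine ⟨fun x => ?_, fun s hs => ?_⟩
  · simp only [Pi.add_apply, Pi.smul_apply, smul_eq_mul]
    exact add_nonneg (mul_nonneg ha (hf.1 x)) (mul_nonneg hb (hg.1 x))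
  · have h1 := hf.2 s hs
    have h2 := hg.2 s hs
    simp only [Pi.add_apply, Pi.smul_apply, smul_eq_mul]
    rw [Finset.sum_add_distrib, ← Finset.mul_sum, ← Finset.mul_sum]
    calc a * ∑ x ∈ s, f x + b * ∑ x ∈ s, g x ≤ a * 1 + b * 1 := by
          exact add_le_add (mul_le_mul_of_nonneg_left h1 ha) (mul_le_mul_of_nonneg_left h2 hb)
      _ = 1 := by rw [mul_one, mul_one, hab]

lemma rho_mem_chainPolytope {A : Finset P} (hA : IsAntichainF P A) :
    rho P A ∈ chainPolytope P := by
  refine ⟨fun x => by unfold rho; split <;> norm_num, fun s hs => ?_⟩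
  have : ∑ x ∈ s, rho P A x = ((s.filter (· ∈ A)).card : ℝ) := by
    unfold rho; rw [Finset.sum_boole]
  rw [this]
  have hcard : (s.filter (· ∈ A)).card ≤ 1 := by
    rw [Finset.card_le_one]
    intro x hx y hy
    simp only [Finset.mem_filter] at hx hy
    by_contra hne
    rcases hs hx.1 hy.1 hne with hle | hle
    · exact hA hx.2 hy.2 hne hle
    · exact hA hy.2 hx.2 (Ne.symm hne) hle
  exact_mod_cast hcard

lemma rho_mem_orderPolytope {I : Finset P} (hI : IsIdealF P I) :
    rho P I ∈ orderPolytope P := by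
  refine ⟨fun x => by unfold rho; split <;> norm_num, fun x y hxy => ?_⟩
  unfold rho
  by_cases hy : y ∈ I
  · simp [hy, hI hy hxy]
  · simp only [hy, if_neg, if_false]
    split <;> norm_num

noncomputable def lfun (c : P → ℝ) : (P → ℝ) →L[ℝ] ℝ :=
  LinearMap.toContinuousLinearMap
    { toFun := fun f => ∑ x, c x * f x
      map_add' := fun f g => by
        simp only [Pi.add_apply, mul_add, Finset.sum_add_distrib]
      map_smul' := fun m f => by
        simp only [Pi.smul_apply, smul_eq_mul, RingHom.id_apply, Finset.mul_sum]
        exact Finset.sum_congr rfl fun x _ => by ring }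

lemma lfun_apply (c : P → ℝ) (f : P → ℝ) : lfun c f = ∑ x, c x * f x :=
  congrFun (LinearMap.coe_toContinuousLinearMap' _) f

lemma lfun_rho (c : P → ℝ) (W : Finset P) : lfun c (rho P W) = ∑ x ∈ W, c x := by
  rw [lfun_apply]
  unfold rho
  simp only [mul_ite, mul_one, mul_zero]
  rw [Finset.sum_ite_mem, Finset.univ_inter]

lemma convex_hyperplane' (l : (P → ℝ) →L[ℝ] ℝ) (m : ℝ) : Convex ℝ {f | l f = m} := by
  intro f hf g hg a b ha hb hab
  simp only [Set.mem_setOf_eq] at hf hg ⊢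
  rw [map_add, map_smul, map_smul, hf, hg, smul_eq_mul, smul_eq_mul, ← add_mul, hab, one_mul]

lemma isExposed_of_eq {S F : Set (P → ℝ)} (l : (P → ℝ) →L[ℝ] ℝ) (m : ℝ)
    (hFS : F ⊆ S) (hFm : ∀ f ∈ F, l f = m) (hSm : ∀ f ∈ S, l f ≤ m)
    (hback : ∀ f ∈ S, l f = m → f ∈ F) : IsExposed ℝ S F := by
  intro hne
  obtain ⟨f₀, hf₀⟩ := hne
  refine ⟨l, Set.ext fun f => ⟨fun hf => ⟨hFS hf, fun y hy => (hSm y hy).trans_eq (hFm f hf).symm⟩,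
    fun hf => ?_⟩⟩
  obtain ⟨hfS, hmax⟩ := hf
  have h2 : m ≤ l f := (hFm f₀ hf₀) ▸ hmax f₀ (hFS hf₀)
  exact hback f hfS (le_antisymm (hSm f hfS) h2)

lemma mem_hull2 {x y f : P → ℝ} {a b : ℝ} (ha : 0 ≤ a) (hb : 0 ≤ b) (hab : a + b = 1)
    (hf : f = a • x + b • y) : f ∈ convexHull ℝ {x, y} := by
  rw [convexHull_pair]
  exact ⟨a, b, ha, hb, hab, hf.symm⟩

lemma mem_hull3 {x y z f : P → ℝ} {a b c : ℝ} (ha : 0 ≤ a) (hb : 0 ≤ b) (hc : 0 ≤ c)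
    (habc : a + b + c = 1) (hf : f = a • x + b • y + c • z) :
    f ∈ convexHull ℝ ({x, y, z} : Set (P → ℝ)) := by
  have hconv := convex_convexHull ℝ ({x, y, z} : Set (P → ℝ))
  have := hconv.sum_mem (t := (Finset.univ : Finset (Fin 3))) (w := ![a, b, c]) (z := ![x, y, z])
    (fun i _ => by fin_cases i <;> assumption)
    (by simp [Fin.sum_univ_three]; linarith)
    (fun i _ => by
      fin_cases i
      · exact subset_convexHull ℝ _ (by simp)
      · exact subset_convexHull ℝ _ (by simp)
      · exact subset_convexHull ℝ _ (by simp))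
  rw [hf]
  simpa [Fin.sum_univ_three] using this

lemma chain_coe_pair (hr : IsMaxRanked P r n) {a c : P} (h : a < c) :
    IsChain (· ≤ ·) (↑({a, c} : Finset P) : Set P) := by
  intro x hx y hy hne
  simp only [Finset.coe_insert, Finset.coe_singleton, Set.mem_insert_iff,
    Set.mem_singleton_iff] at hx hy
  rcases hx with rfl | rfl <;> rcases hy with rfl | rfl
  · exact absurd rfl hne
  · exact Or.inl h.le
  · exact Or.inr h.le
  · exact absurd rfl hne

lemma chain_coe_triple (hr : IsMaxRanked P r n) {u a c : P} (h1 : u < a) (h2 : a < c) :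
    IsChain (· ≤ ·) (↑({u, a, c} : Finset P) : Set P) := by
  intro x hx y hy hne
  simp only [Finset.coe_insert, Finset.coe_singleton, Set.mem_insert_iff,
    Set.mem_singleton_iff] at hx hy
  rcases hx with rfl | rfl | rfl <;> rcases hy with rfl | rfl | rfl <;>
    first
      | exact absurd rfl hne
      | exact Or.inl h1.le
      | exact Or.inl h2.le
      | exact Or.inl (h1.trans h2).le
      | exact Or.inr h1.le
      | exact Or.inr h2.le
      | exact Or.inr (h1.trans h2).le

lemma sum_pair_le {f : P → ℝ} (hf : f ∈ chainPolytope P) (hr : IsMaxRanked P r n)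
    {a c : P} (h : a < c) : f a + f c ≤ 1 := by
  have := hf.2 {a, c} (chain_coe_pair hr h)
  rwa [Finset.sum_pair h.ne] at this

lemma sum_triple_le {f : P → ℝ} (hf : f ∈ chainPolytope P) (hr : IsMaxRanked P r n)
    {u a c : P} (h1 : u < a) (h2 : a < c) : f u + f a + f c ≤ 1 := by
  have := hf.2 {u, a, c} (chain_coe_triple hr h1 h2)
  have hu : u ∉ ({a, c} : Finset P) := by
    simp only [Finset.mem_insert, Finset.mem_singleton]
    push_neg
    exact ⟨h1.ne, (h1.trans h2).ne⟩
  rw [Finset.sum_insert hu, Finset.sum_pair h2.ne] at this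
  linarith

lemma forced_eq_one {β : Type*} {s : Finset β} {g : β → ℝ} (h1 : ∀ i ∈ s, g i ≤ 1)
    (h2 : (s.card : ℝ) ≤ ∑ i ∈ s, g i) : ∀ i ∈ s, g i = 1 := by
  have hz : ∑ i ∈ s, (1 - g i) = 0 := by
    rw [Finset.sum_sub_distrib, Finset.sum_const, nsmul_eq_mul, mul_one]
    have : ∑ i ∈ s, g i ≤ (s.card : ℝ) := by
      calc ∑ i ∈ s, g i ≤ ∑ _i ∈ s, (1:ℝ) := Finset.sum_le_sum h1
        _ = s.card := by rw [Finset.sum_const, nsmul_eq_mul, mul_one]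
    linarith
  intro i hi
  have := (Finset.sum_eq_zero_iff_of_nonneg (fun i hi => by linarith [h1 i hi])).mp hz i hi
  linarith

end Aux2

section Aux3

set_option linter.unusedSectionVars false
set_option maxHeartbeats 1000000

variable {P}
variable {r : P → ℕ} {n : ℕ}

lemma edge_exposed (hr : IsMaxRanked P r n) {A C : Finset P} (hA : A.Nonempty)
    (hC : C.Nonempty) (hAanti : IsAntichainF P A) (hCanti : IsAntichainF P C)
    (hlt : ∀ a ∈ A, ∀ c ∈ C, a < c) :
    IsExposed ℝ (chainPolytope P) (convexHull ℝ {rho P A, rho P C}) := by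
  have hdisj : ∀ x, x ∈ A → x ∈ C → False := fun x h1 h2 => lt_irrefl x (hlt x h1 x h2)
  have hDisj : Disjoint A C := Finset.disjoint_left.mpr fun {x} h1 h2 => hdisj x h1 h2
  set cv : P → ℝ := fun x => if x ∈ A then (C.card : ℝ) else if x ∈ C then (A.card : ℝ) else -1
    with hcv
  set m : ℝ := (A.card : ℝ) * (C.card : ℝ) with hm
  have hcvA : ∀ x ∈ A, cv x = (C.card : ℝ) := fun x hx => by
    simp only [hcv]; rw [if_pos hx]
  have hcvC : ∀ x ∈ C, cv x = (A.card : ℝ) := fun x hx => by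
    simp only [hcv]; rw [if_neg (fun h => hdisj x h hx), if_pos hx]
  have hcvO : ∀ x, x ∉ A → x ∉ C → cv x = -1 := fun x h1 h2 => by
    simp only [hcv]; rw [if_neg h1, if_neg h2]
  have hlA : lfun cv (rho P A) = m := by
    rw [lfun_rho, Finset.sum_congr rfl hcvA, Finset.sum_const, nsmul_eq_mul, hm]
  have hlC : lfun cv (rho P C) = m := by
    rw [lfun_rho, Finset.sum_congr rfl hcvC, Finset.sum_const, nsmul_eq_mul, hm, mul_comm]
  have hsplit : ∀ f : P → ℝ,
      lfun cv f = (∑ p ∈ A ×ˢ C, (f p.1 + f p.2)) - ∑ x ∈ univ \ (A ∪ C), f x := by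
    intro f
    rw [lfun_apply]
    have hsd : ∑ x ∈ univ \ (A ∪ C), cv x * f x + ∑ x ∈ A ∪ C, cv x * f x
        = ∑ x ∈ univ, cv x * f x := Finset.sum_sdiff (Finset.subset_univ _)
    rw [← hsd, Finset.sum_union hDisj]
    have e1 : ∑ x ∈ univ \ (A ∪ C), cv x * f x = - ∑ x ∈ univ \ (A ∪ C), f x := by
      rw [← Finset.sum_neg_distrib]
      refine Finset.sum_congr rfl fun x hx => ?_
      rw [Finset.mem_sdiff, Finset.mem_union] at hx
      push_neg at hx
      rw [hcvO x hx.2.1 hx.2.2, neg_one_mul]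
    have e2 : ∑ x ∈ A, cv x * f x = (C.card : ℝ) * ∑ x ∈ A, f x := by
      rw [Finset.mul_sum]
      exact Finset.sum_congr rfl fun x hx => by rw [hcvA x hx]
    have e3 : ∑ x ∈ C, cv x * f x = (A.card : ℝ) * ∑ x ∈ C, f x := by
      rw [Finset.mul_sum]
      exact Finset.sum_congr rfl fun x hx => by rw [hcvC x hx]
    have e4 : ∑ p ∈ A ×ˢ C, (f p.1 + f p.2)
        = (C.card : ℝ) * ∑ x ∈ A, f x + (A.card : ℝ) * ∑ x ∈ C, f x := by
      rw [Finset.sum_product]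
      simp only [Finset.sum_add_distrib, Finset.sum_const, nsmul_eq_mul, Finset.mul_sum]
    rw [e1, e2, e3, e4]
    ring
  have hpair : ∀ f ∈ chainPolytope P, ∀ p ∈ A ×ˢ C, f p.1 + f p.2 ≤ 1 := by
    intro f hf p hp
    rw [Finset.mem_product] at hp
    exact sum_pair_le hf hr (hlt _ hp.1 _ hp.2)
  have hcardm : ((A ×ˢ C).card : ℝ) = m := by
    rw [Finset.card_product, hm]; push_cast; ring
  have hT : ∀ f ∈ chainPolytope P, ∑ p ∈ A ×ˢ C, (f p.1 + f p.2) ≤ m := by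
    intro f hf
    calc ∑ p ∈ A ×ˢ C, (f p.1 + f p.2) ≤ ∑ _p ∈ A ×ˢ C, (1 : ℝ) :=
          Finset.sum_le_sum (hpair f hf)
      _ = ((A ×ˢ C).card : ℝ) := by rw [Finset.sum_const, nsmul_eq_mul, mul_one]
      _ = m := hcardm
  have hbound : ∀ f ∈ chainPolytope P, lfun cv f ≤ m := by
    intro f hf
    rw [hsplit f]
    have hR : 0 ≤ ∑ x ∈ univ \ (A ∪ C), f x := Finset.sum_nonneg fun x _ => hf.1 x
    linarith [hT f hf]
  refine isExposed_of_eq (lfun cv) m ?_ ?_ hbound ?_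
  · refine convexHull_min ?_ chainPolytope_convex
    rintro f (rfl | rfl)
    · exact rho_mem_chainPolytope hAanti
    · exact rho_mem_chainPolytope hCanti
  · have hsub : convexHull ℝ {rho P A, rho P C} ⊆ {f | lfun cv f = m} := by
      refine convexHull_min ?_ (convex_hyperplane' _ _)
      rintro f (rfl | rfl)
      · exact hlA
      · exact hlC
    exact fun f hf => hsub hf
  · intro f hfS hfeq
    rw [hsplit f] at hfeq
    have hR : 0 ≤ ∑ x ∈ univ \ (A ∪ C), f x := Finset.sum_nonneg fun x _ => hfS.1 x
    have hTeq : (((A ×ˢ C).card : ℝ)) ≤ ∑ p ∈ A ×ˢ C, (f p.1 + f p.2) := by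
      rw [hcardm]; linarith [hT f hfS]
    have hReq : ∑ x ∈ univ \ (A ∪ C), f x = 0 := by linarith [hT f hfS]
    have hone : ∀ p ∈ A ×ˢ C, f p.1 + f p.2 = 1 := forced_eq_one (hpair f hfS) hTeq
    have hzero : ∀ x, x ∉ A → x ∉ C → f x = 0 := by
      intro x hxA hxC
      have hx : x ∈ univ \ (A ∪ C) := by simp [hxA, hxC]
      exact (Finset.sum_eq_zero_iff_of_nonneg fun y _ => hfS.1 y).mp hReq x hx
    obtain ⟨a₀, ha₀⟩ := hA
    obtain ⟨c₀, hc₀⟩ := hC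
    have hfa : ∀ a ∈ A, f a = f a₀ := by
      intro a ha
      have h1 := hone (a, c₀) (Finset.mem_product.mpr ⟨ha, hc₀⟩)
      have h2 := hone (a₀, c₀) (Finset.mem_product.mpr ⟨ha₀, hc₀⟩)
      simp only at h1 h2
      linarith
    have hfc : ∀ c ∈ C, f c = 1 - f a₀ := by
      intro c hc
      have h1 := hone (a₀, c) (Finset.mem_product.mpr ⟨ha₀, hc⟩)
      simp only at h1
      linarith
    refine mem_hull2 (a := f a₀) (b := 1 - f a₀) (hfS.1 a₀)
      (by have := hfS.1 c₀; have := hfc c₀ hc₀; linarith) (by ring) ?_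
    funext x
    simp only [Pi.add_apply, Pi.smul_apply, smul_eq_mul]
    unfold rho
    by_cases hxA : x ∈ A
    · rw [if_pos hxA, if_neg (fun h => hdisj x hxA h), hfa x hxA]; ring
    · by_cases hxC : x ∈ C
      · rw [if_neg hxA, if_pos hxC, hfc x hxC]; ring
      · rw [if_neg hxA, if_neg hxC, hzero x hxA hxC]; ring

end Aux3

section Aux4

set_option linter.unusedSectionVars false
set_option maxHeartbeats 1000000

variable {P}
variable {r : P → ℕ} {n : ℕ}

lemma antichain_singleton (u : P) : IsAntichainF P ({u} : Finset P) := by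
  intro x hx y hy hne
  simp only [Finset.coe_singleton, Set.mem_singleton_iff] at hx hy
  exact absurd (hx.trans hy.symm) hne

lemma antichain_pair {u v : P} (h1 : ¬ u ≤ v) (h2 : ¬ v ≤ u) :
    IsAntichainF P ({u, v} : Finset P) := by
  intro x hx y hy hne
  simp only [Finset.coe_insert, Finset.coe_singleton, Set.mem_insert_iff,
    Set.mem_singleton_iff] at hx hy
  rcases hx with rfl | rfl <;> rcases hy with rfl | rfl
  · exact absurd rfl hne
  · exact h1
  · exact h2
  · exact absurd rfl hne

lemma tri_exposed1 (hr : IsMaxRanked P r n) {A C : Finset P} {u : P} (hA : A.Nonempty)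
    (hC : C.Nonempty) (hAanti : IsAntichainF P A) (hCanti : IsAntichainF P C)
    (hua : ∀ a ∈ A, u < a) (hac : ∀ a ∈ A, ∀ c ∈ C, a < c) :
    IsExposed ℝ (chainPolytope P)
      (convexHull ℝ {rho P A, rho P ({u} : Finset P), rho P C}) := by
  have hdisj : ∀ x, x ∈ A → x ∈ C → False := fun x h1 h2 => lt_irrefl x (hac x h1 x h2)
  have hDisj : Disjoint A C := Finset.disjoint_left.mpr fun {x} h1 h2 => hdisj x h1 h2
  have huA : u ∉ A := fun h => lt_irrefl u (hua u h)
  obtain ⟨a₀, ha₀⟩ := hA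
  obtain ⟨c₀, hc₀⟩ := hC
  have huc : ∀ c ∈ C, u < c := fun c hc => (hua a₀ ha₀).trans (hac a₀ ha₀ c hc)
  have huC : u ∉ C := fun h => lt_irrefl u (huc u h)
  have huAC : u ∉ A ∪ C := by simp [huA, huC]
  set m : ℝ := (A.card : ℝ) * (C.card : ℝ) with hm
  set cv : P → ℝ := fun x => if x = u then m else if x ∈ A then (C.card : ℝ)
    else if x ∈ C then (A.card : ℝ) else -1 with hcv
  have hcvu : cv u = m := by simp [hcv]
  have hcvA : ∀ x ∈ A, cv x = (C.card : ℝ) := fun x hx => by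
    simp only [hcv]; rw [if_neg (by rintro rfl; exact huA hx), if_pos hx]
  have hcvC : ∀ x ∈ C, cv x = (A.card : ℝ) := fun x hx => by
    simp only [hcv]
    rw [if_neg (by rintro rfl; exact huC hx), if_neg (fun h => hdisj x h hx), if_pos hx]
  have hcvO : ∀ x, x ≠ u → x ∉ A → x ∉ C → cv x = -1 := fun x h0 h1 h2 => by
    simp only [hcv]; rw [if_neg h0, if_neg h1, if_neg h2]
  have hlA : lfun cv (rho P A) = m := by
    rw [lfun_rho, Finset.sum_congr rfl hcvA, Finset.sum_const, nsmul_eq_mul, hm]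
  have hlC : lfun cv (rho P C) = m := by
    rw [lfun_rho, Finset.sum_congr rfl hcvC, Finset.sum_const, nsmul_eq_mul, hm, mul_comm]
  have hlu : lfun cv (rho P ({u} : Finset P)) = m := by
    rw [lfun_rho, Finset.sum_singleton, hcvu]
  have hsplit : ∀ f : P → ℝ, lfun cv f
      = (∑ p ∈ A ×ˢ C, (f u + f p.1 + f p.2)) - ∑ x ∈ univ \ insert u (A ∪ C), f x := by
    intro f
    rw [lfun_apply]
    have hsd : ∑ x ∈ univ \ insert u (A ∪ C), cv x * f x + ∑ x ∈ insert u (A ∪ C), cv x * f x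
        = ∑ x ∈ univ, cv x * f x := Finset.sum_sdiff (Finset.subset_univ _)
    rw [← hsd, Finset.sum_insert huAC, Finset.sum_union hDisj]
    have e1 : ∑ x ∈ univ \ insert u (A ∪ C), cv x * f x
        = - ∑ x ∈ univ \ insert u (A ∪ C), f x := by
      rw [← Finset.sum_neg_distrib]
      refine Finset.sum_congr rfl fun x hx => ?_
      rw [Finset.mem_sdiff, Finset.mem_insert, Finset.mem_union] at hx
      push_neg at hx
      rw [hcvO x hx.2.1 hx.2.2.1 hx.2.2.2, neg_one_mul]
    have e2 : ∑ x ∈ A, cv x * f x = (C.card : ℝ) * ∑ x ∈ A, f x := by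
      rw [Finset.mul_sum]
      exact Finset.sum_congr rfl fun x hx => by rw [hcvA x hx]
    have e3 : ∑ x ∈ C, cv x * f x = (A.card : ℝ) * ∑ x ∈ C, f x := by
      rw [Finset.mul_sum]
      exact Finset.sum_congr rfl fun x hx => by rw [hcvC x hx]
    have e4 : ∑ p ∈ A ×ˢ C, (f u + f p.1 + f p.2)
        = m * f u + ((C.card : ℝ) * ∑ x ∈ A, f x + (A.card : ℝ) * ∑ x ∈ C, f x) := by
      have : ∀ p : P × P, f u + f p.1 + f p.2 = f u + (f p.1 + f p.2) := fun p => by ring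
      rw [Finset.sum_congr rfl fun p _ => this p, Finset.sum_add_distrib, Finset.sum_const,
        nsmul_eq_mul, Finset.card_product]
      have e4' : ∑ p ∈ A ×ˢ C, (f p.1 + f p.2)
          = (C.card : ℝ) * ∑ x ∈ A, f x + (A.card : ℝ) * ∑ x ∈ C, f x := by
        rw [Finset.sum_product]
        simp only [Finset.sum_add_distrib, Finset.sum_const, nsmul_eq_mul, Finset.mul_sum]
      rw [e4', hm]
      push_cast
      ring
    rw [e1, e2, e3, e4, hcvu]
    ring
  have hpair : ∀ f ∈ chainPolytope P, ∀ p ∈ A ×ˢ C, f u + f p.1 + f p.2 ≤ 1 := by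
    intro f hf p hp
    rw [Finset.mem_product] at hp
    exact sum_triple_le hf hr (hua _ hp.1) (hac _ hp.1 _ hp.2)
  have hcardm : ((A ×ˢ C).card : ℝ) = m := by
    rw [Finset.card_product, hm]; push_cast; ring
  have hT : ∀ f ∈ chainPolytope P, ∑ p ∈ A ×ˢ C, (f u + f p.1 + f p.2) ≤ m := by
    intro f hf
    calc ∑ p ∈ A ×ˢ C, (f u + f p.1 + f p.2) ≤ ∑ _p ∈ A ×ˢ C, (1 : ℝ) :=
          Finset.sum_le_sum (hpair f hf)
      _ = ((A ×ˢ C).card : ℝ) := by rw [Finset.sum_const, nsmul_eq_mul, mul_one]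
      _ = m := hcardm
  have hbound : ∀ f ∈ chainPolytope P, lfun cv f ≤ m := by
    intro f hf
    rw [hsplit f]
    have hR : 0 ≤ ∑ x ∈ univ \ insert u (A ∪ C), f x := Finset.sum_nonneg fun x _ => hf.1 x
    linarith [hT f hf]
  refine isExposed_of_eq (lfun cv) m ?_ ?_ hbound ?_
  · refine convexHull_min ?_ chainPolytope_convex
    rintro f (rfl | rfl | rfl)
    · exact rho_mem_chainPolytope hAanti
    · exact rho_mem_chainPolytope (antichain_singleton u)
    · exact rho_mem_chainPolytope hCanti
  · have hsub : convexHull ℝ {rho P A, rho P ({u} : Finset P), rho P C}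
        ⊆ {f | lfun cv f = m} := by
      refine convexHull_min ?_ (convex_hyperplane' _ _)
      rintro f (rfl | rfl | rfl)
      · exact hlA
      · exact hlu
      · exact hlC
    exact fun f hf => hsub hf
  · intro f hfS hfeq
    rw [hsplit f] at hfeq
    have hR : 0 ≤ ∑ x ∈ univ \ insert u (A ∪ C), f x := Finset.sum_nonneg fun x _ => hfS.1 x
    have hTeq : (((A ×ˢ C).card : ℝ)) ≤ ∑ p ∈ A ×ˢ C, (f u + f p.1 + f p.2) := by
      rw [hcardm]; linarith [hT f hfS]
    have hReq : ∑ x ∈ univ \ insert u (A ∪ C), f x = 0 := by linarith [hT f hfS]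
    have hone : ∀ p ∈ A ×ˢ C, f u + f p.1 + f p.2 = 1 := forced_eq_one (hpair f hfS) hTeq
    have hzero : ∀ x, x ≠ u → x ∉ A → x ∉ C → f x = 0 := by
      intro x hxu hxA hxC
      have hx : x ∈ univ \ insert u (A ∪ C) := by simp [hxu, hxA, hxC]
      exact (Finset.sum_eq_zero_iff_of_nonneg fun y _ => hfS.1 y).mp hReq x hx
    have hfa : ∀ a ∈ A, f a = f a₀ := by
      intro a ha
      have h1 := hone (a, c₀) (Finset.mem_product.mpr ⟨ha, hc₀⟩)
      have h2 := hone (a₀, c₀) (Finset.mem_product.mpr ⟨ha₀, hc₀⟩)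
      simp only at h1 h2
      linarith
    have hfc : ∀ c ∈ C, f c = f c₀ := by
      intro c hc
      have h1 := hone (a₀, c) (Finset.mem_product.mpr ⟨ha₀, hc⟩)
      have h2 := hone (a₀, c₀) (Finset.mem_product.mpr ⟨ha₀, hc₀⟩)
      simp only at h1 h2
      linarith
    have hsum1 : f u + f a₀ + f c₀ = 1 := hone (a₀, c₀) (Finset.mem_product.mpr ⟨ha₀, hc₀⟩)
    refine mem_hull3 (a := f a₀) (b := f u) (c := f c₀) (hfS.1 a₀) (hfS.1 u) (hfS.1 c₀)
      (by linarith) ?_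
    funext x
    simp only [Pi.add_apply, Pi.smul_apply, smul_eq_mul]
    unfold rho
    by_cases hxu : x = u
    · subst hxu
      rw [if_neg huA, if_pos (Finset.mem_singleton_self x), if_neg huC]
      ring
    · by_cases hxA : x ∈ A
      · rw [if_pos hxA, if_neg (by simpa using hxu), if_neg (fun h => hdisj x hxA h), hfa x hxA]
        ring
      · by_cases hxC : x ∈ C
        · rw [if_neg hxA, if_neg (by simpa using hxu), if_pos hxC, hfc x hxC]
          ring
        · rw [if_neg hxA, if_neg (by simpa using hxu), if_neg hxC, hzero x hxu hxA hxC]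
          ring

end Aux4

section Aux5

set_option linter.unusedSectionVars false
set_option maxHeartbeats 1000000

variable {P}
variable {r : P → ℕ} {n : ℕ}

lemma tri_exposed2 (hr : IsMaxRanked P r n) {A : Finset P} {u v : P} (hA : A.Nonempty)
    (hAanti : IsAntichainF P A) (huv : u ≠ v) (huv1 : ¬ u ≤ v) (huv2 : ¬ v ≤ u)
    (hau : ∀ a ∈ A, a < u) (hav : ∀ a ∈ A, a < v) :
    IsExposed ℝ (chainPolytope P)
      (convexHull ℝ {rho P A, rho P ({u} : Finset P), rho P ({u, v} : Finset P)}) := by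
  have huA : u ∉ A := fun h => lt_irrefl u (hau u h)
  have hvA : v ∉ A := fun h => lt_irrefl v (hav v h)
  obtain ⟨a₀, ha₀⟩ := hA
  set m : ℝ := (A.card : ℝ) with hm
  set cv : P → ℝ := fun x => if x = u then m else if x ∈ A then 1
    else if x = v then 0 else -1 with hcv
  have hcvu : cv u = m := by simp [hcv]
  have hcvv : cv v = 0 := by
    have h' : v ≠ u := Ne.symm huv
    simp [hcv, hvA, h']
  have hcvA : ∀ x ∈ A, cv x = 1 := fun x hx => by
    simp only [hcv]; rw [if_neg (by rintro rfl; exact huA hx), if_pos hx]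
  have hcvO : ∀ x, x ≠ u → x ∉ A → x ≠ v → cv x = -1 := fun x h0 h1 h2 => by
    simp only [hcv]; rw [if_neg h0, if_neg h1, if_neg h2]
  have hlA : lfun cv (rho P A) = m := by
    rw [lfun_rho, Finset.sum_congr rfl hcvA, Finset.sum_const, nsmul_eq_mul, mul_one, hm]
  have hlu : lfun cv (rho P ({u} : Finset P)) = m := by
    rw [lfun_rho, Finset.sum_singleton, hcvu]
  have hluv : lfun cv (rho P ({u, v} : Finset P)) = m := by
    rw [lfun_rho, Finset.sum_pair huv, hcvu, hcvv, add_zero]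
  set U : Finset P := insert u (insert v A) with hU
  have huU : u ∉ insert v A := by simp [huv, huA]
  have hvU : v ∉ A := hvA
  have hsplit : ∀ f : P → ℝ,
      lfun cv f = (∑ a ∈ A, (f u + f a)) - ∑ x ∈ univ \ U, f x := by
    intro f
    rw [lfun_apply]
    have hsd : ∑ x ∈ univ \ U, cv x * f x + ∑ x ∈ U, cv x * f x
        = ∑ x ∈ univ, cv x * f x := Finset.sum_sdiff (Finset.subset_univ _)
    rw [← hsd, hU, Finset.sum_insert huU, Finset.sum_insert hvU]
    have e1 : ∑ x ∈ univ \ U, cv x * f x = - ∑ x ∈ univ \ U, f x := by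
      rw [← Finset.sum_neg_distrib]
      refine Finset.sum_congr rfl fun x hx => ?_
      rw [hU, Finset.mem_sdiff, Finset.mem_insert, Finset.mem_insert] at hx
      push_neg at hx
      rw [hcvO x hx.2.1 hx.2.2.2 hx.2.2.1, neg_one_mul]
    have e2 : ∑ x ∈ A, cv x * f x = ∑ x ∈ A, f x := by
      refine Finset.sum_congr rfl fun x hx => by rw [hcvA x hx, one_mul]
    have e3 : ∑ a ∈ A, (f u + f a) = m * f u + ∑ x ∈ A, f x := by
      rw [Finset.sum_add_distrib, Finset.sum_const, nsmul_eq_mul, hm]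
    rw [e1, e2, e3, hcvu, hcvv]
    ring
  have hpair : ∀ f ∈ chainPolytope P, ∀ a ∈ A, f u + f a ≤ 1 := by
    intro f hf a ha
    have := sum_pair_le hf hr (hau a ha)
    linarith only [this]
  have hcardm : ((A.card : ℕ) : ℝ) = m := by rw [hm]
  have hT : ∀ f ∈ chainPolytope P, ∑ a ∈ A, (f u + f a) ≤ m := by
    intro f hf
    calc ∑ a ∈ A, (f u + f a) ≤ ∑ _a ∈ A, (1 : ℝ) := Finset.sum_le_sum (hpair f hf)
      _ = (A.card : ℝ) := by rw [Finset.sum_const, nsmul_eq_mul, mul_one]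
      _ = m := hcardm
  have hbound : ∀ f ∈ chainPolytope P, lfun cv f ≤ m := by
    intro f hf
    rw [hsplit f]
    have hR : 0 ≤ ∑ x ∈ univ \ U, f x := Finset.sum_nonneg fun x _ => hf.1 x
    linarith only [hT f hf, hR]
  refine isExposed_of_eq (lfun cv) m ?_ ?_ hbound ?_
  · refine convexHull_min ?_ chainPolytope_convex
    rintro f (rfl | rfl | rfl)
    · exact rho_mem_chainPolytope hAanti
    · exact rho_mem_chainPolytope (antichain_singleton u)
    · exact rho_mem_chainPolytope (antichain_pair huv1 huv2)
  · have hsub : convexHull ℝ {rho P A, rho P ({u} : Finset P), rho P ({u, v} : Finset P)}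
        ⊆ {f | lfun cv f = m} := by
      refine convexHull_min ?_ (convex_hyperplane' _ _)
      rintro f (rfl | rfl | rfl)
      · exact hlA
      · exact hlu
      · exact hluv
    exact fun f hf => hsub hf
  · intro f hfS hfeq
    rw [hsplit f] at hfeq
    have hR : 0 ≤ ∑ x ∈ univ \ U, f x := Finset.sum_nonneg fun x _ => hfS.1 x
    have hTeq : ((A.card : ℕ) : ℝ) ≤ ∑ a ∈ A, (f u + f a) := by
      rw [hcardm]; linarith only [hfeq, hR]
    have hReq : ∑ x ∈ univ \ U, f x = 0 := by linarith only [hfeq, hT f hfS, hR]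
    have hone : ∀ a ∈ A, f u + f a = 1 := forced_eq_one (hpair f hfS) hTeq
    have hzero : ∀ x, x ≠ u → x ≠ v → x ∉ A → f x = 0 := by
      intro x hxu hxv hxA
      have hx : x ∈ univ \ U := by simp [hU, hxu, hxv, hxA]
      exact (Finset.sum_eq_zero_iff_of_nonneg fun y _ => hfS.1 y).mp hReq x hx
    have hfa : ∀ a ∈ A, f a = f a₀ := by
      intro a ha
      have h1 := hone a ha
      have h2 := hone a₀ ha₀
      linarith only [h1, h2]
    have hsum1 : f u + f a₀ = 1 := hone a₀ ha₀
    have hvu : f v ≤ f u := by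
      have := sum_pair_le hfS hr (hav a₀ ha₀)
      linarith only [this, hsum1]
    refine mem_hull3 (a := f a₀) (b := f u - f v) (c := f v) (hfS.1 a₀)
      (by linarith only [hvu]) (hfS.1 v) (by linarith only [hsum1]) ?_
    funext x
    simp only [Pi.add_apply, Pi.smul_apply, smul_eq_mul]
    unfold rho
    by_cases hxu : x = u
    · subst hxu
      rw [if_neg huA, if_pos (Finset.mem_singleton_self x),
        if_pos (Finset.mem_insert_self x _)]
      ring
    · by_cases hxv : x = v
      · subst hxv
        rw [if_neg hvA, if_neg (by simpa using hxu),
          if_pos (by simp)]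
        ring
      · by_cases hxA : x ∈ A
        · rw [if_pos hxA, if_neg (by simpa using hxu),
            if_neg (by simp [hxu, hxv]), hfa x hxA]
          ring
        · rw [if_neg hxA, if_neg (by simpa using hxu), if_neg (by simp [hxu, hxv]),
            hzero x hxu hxv hxA]
          ring

end Aux5

section Aux6

set_option linter.unusedSectionVars false
set_option maxHeartbeats 1000000

variable {P}
variable {r : P → ℕ} {n : ℕ}

lemma not_edge_orderPolytope {L Kf : Finset P} (hL : IsIdealF P L) (hKf : IsIdealF P Kf)
    {c₁ c₂ : P} (hne : c₁ ≠ c₂) (hc₁K : c₁ ∈ Kf) (hc₂K : c₂ ∈ Kf) (hc₁L : c₁ ∉ L)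
    (hc₂L : c₂ ∉ L) (hLK : L ⊆ Kf) (hdown : ∀ y, y < c₁ → y ∈ L)
    (hmax : ∀ y ∈ Kf, ¬ c₁ < y) :
    ¬ IsEdgeOf P (orderPolytope P) (rho P L) (rho P Kf) := by
  rintro ⟨hne', hexp⟩
  obtain ⟨l, hl⟩ := hexp ⟨rho P L, subset_convexHull ℝ _ (by simp)⟩
  have hI1 : IsIdealF P (insert c₁ L) := by
    intro x y hx hyx
    rcases Finset.mem_insert.mp hx with rfl | hx'
    · rcases eq_or_lt_of_le hyx with rfl | hlt
      · exact Finset.mem_insert_self _ _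
      · exact Finset.mem_insert_of_mem (hdown y hlt)
    · exact Finset.mem_insert_of_mem (hL hx' hyx)
  have hI2 : IsIdealF P (Kf.erase c₁) := by
    intro x y hx hyx
    have hxK := Finset.mem_of_mem_erase hx
    refine Finset.mem_erase.mpr ⟨?_, hKf hxK hyx⟩
    rintro rfl
    exact hmax x hxK (lt_of_le_of_ne hyx (Finset.ne_of_mem_erase hx).symm)
  set p₁ := rho P (insert c₁ L) with hp₁
  set p₂ := rho P (Kf.erase c₁) with hp₂
  have hmid : (1/2 : ℝ) • rho P L + (1/2 : ℝ) • rho P Kf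
      ∈ convexHull ℝ {rho P L, rho P Kf} :=
    mem_hull2 (by norm_num) (by norm_num) (by norm_num) rfl
  rw [hl] at hmid
  obtain ⟨hmidO, hmax'⟩ := hmid
  have hsum : rho P L + rho P Kf = p₁ + p₂ := by
    funext x
    simp only [Pi.add_apply, hp₁, hp₂]
    unfold rho
    by_cases hx : x = c₁
    · subst hx
      rw [if_neg hc₁L, if_pos hc₁K, if_pos (Finset.mem_insert_self _ _),
        if_neg (fun h => (Finset.mem_erase.mp h).1 rfl)]
      norm_num
    · have h1 : x ∈ insert c₁ L ↔ x ∈ L := by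
        rw [Finset.mem_insert]
        exact ⟨fun h => h.resolve_left hx, Or.inr⟩
      have h2 : x ∈ Kf.erase c₁ ↔ x ∈ Kf := by
        rw [Finset.mem_erase]
        exact ⟨And.right, fun h => ⟨hx, h⟩⟩
      by_cases hxL : x ∈ L
      · rw [if_pos hxL, if_pos (hLK hxL), if_pos (h1.mpr hxL), if_pos (h2.mpr (hLK hxL))]
      · by_cases hxK : x ∈ Kf
        · rw [if_neg hxL, if_pos hxK, if_neg (fun h => hxL (h1.mp h)), if_pos (h2.mpr hxK)]
        · rw [if_neg hxL, if_neg hxK, if_neg (fun h => hxL (h1.mp h)),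
            if_neg (fun h => hxK (h2.mp h))]
  have hlsum : l (rho P L) + l (rho P Kf) = l p₁ + l p₂ := by
    rw [← map_add, ← map_add, hsum]
  have hmval : l ((1/2 : ℝ) • rho P L + (1/2 : ℝ) • rho P Kf)
      = (l (rho P L) + l (rho P Kf)) / 2 := by
    rw [map_add, map_smul, map_smul, smul_eq_mul, smul_eq_mul]
    ring
  have h1le := hmax' p₁ (rho_mem_orderPolytope hI1)
  have h2le := hmax' p₂ (rho_mem_orderPolytope hI2)
  rw [hmval] at h1le h2le
  have h1eq : l p₁ = l ((1/2 : ℝ) • rho P L + (1/2 : ℝ) • rho P Kf) := by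
    rw [hmval]; linarith only [h1le, h2le, hlsum]
  have hp₁mem : p₁ ∈ convexHull ℝ {rho P L, rho P Kf} := by
    rw [hl]
    exact ⟨rho_mem_orderPolytope hI1, fun y hy => (hmax' y hy).trans_eq h1eq.symm⟩
  rw [convexHull_pair] at hp₁mem
  obtain ⟨a, b, ha, hb, hab, heq⟩ := hp₁mem
  have e1 := congrFun heq c₁
  have e2 := congrFun heq c₂
  simp only [Pi.add_apply, Pi.smul_apply, smul_eq_mul, hp₁] at e1 e2
  unfold rho at e1 e2
  rw [if_neg hc₁L, if_pos hc₁K, if_pos (Finset.mem_insert_self _ _)] at e1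
  rw [if_neg hc₂L, if_pos hc₂K,
    if_neg (by rw [Finset.mem_insert]; push_neg; exact ⟨Ne.symm hne, hc₂L⟩)] at e2
  simp only [mul_zero, mul_one, zero_add] at e1 e2
  rw [e2] at e1
  norm_num at e1

end Aux6

set_option maxHeartbeats 1000000


/-- Case 2 of Lemma 3.4: if `J ⊆ K` are nonempty distinct connected
poset ideals with `K \ J` connected, `|max J| = 1`, `|max K| ≥ 2`, `max J ⊆ P_j`,
`max K ⊆ P_k`, `j ≤ k ≤ n` and `k - j ≠ 1`, then `k ≥ 1`, the sets `P_{k-1}`, `max J`,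
`max K` are pairwise distinct antichains, and `{P_{k-1}, max J, max K} ∈ Δ*_C(P)`. -/
theorem case2_mem_DeltaStarC
    (r : P → ℕ) (n : ℕ) (hr : IsMaxRanked P r n)
    (J K : Finset P) (hJ : IsIdealF P J) (hK : IsIdealF P K)
    (hJne : J.Nonempty) (hKne : K.Nonempty) (hne : J ≠ K) (hJK : J ⊆ K)
    (hcJ : ConnIn P (↑J)) (hcK : ConnIn P (↑K)) (hcKJ : ConnIn P (↑(K \ J)))
    (hmaxJ : (maxSet P J).card = 1) (hmaxK : 2 ≤ (maxSet P K).card)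
    (j k : ℕ) (hjk : j ≤ k) (hkn : k ≤ n) (hkj : k - j ≠ 1)
    (hj : maxSet P J ⊆ level P r j) (hk : maxSet P K ⊆ level P r k) :
    1 ≤ k ∧
    IsAntichainF P (level P r (k - 1)) ∧ IsAntichainF P (maxSet P J) ∧
      IsAntichainF P (maxSet P K) ∧
    level P r (k - 1) ≠ maxSet P J ∧ level P r (k - 1) ≠ maxSet P K ∧
      maxSet P J ≠ maxSet P K ∧
    ({level P r (k - 1), maxSet P J, maxSet P K} : Finset (Finset P)) ∈ DeltaStarC P := by
  obtain ⟨u, hu⟩ := Finset.card_eq_one.mp hmaxJ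
  have huJset : u ∈ maxSet P J := hu ▸ Finset.mem_singleton_self u
  have hru : r u = j := mem_level.mp (hj huJset)
  have huJ : u ∈ J := maxSet_subset _ huJset
  have hmaxKne : (maxSet P K).Nonempty := Finset.card_pos.mp (by omega)
  have hKiff := ideal_struct hr hK hmaxKne hk
  have hJiff := ideal_struct hr hJ ⟨u, huJset⟩ hj
  have hrC : ∀ c ∈ maxSet P K, r c = k := fun c hc => mem_level.mp (hk hc)
  -- k ≥ 1
  have hk1 : 1 ≤ k := by
    by_contra hcon
    have hk0 : k = 0 := by omega
    obtain ⟨x, hx, y, hy, hxy⟩ := Finset.one_lt_card.mp (by omega : 1 < (maxSet P K).card)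
    have hrank0 : ∀ z ∈ K, r z = 0 := by
      intro z hz
      rcases (hKiff z).mp hz with h | h
      · omega
      · rw [hrC z h, hk0]
    have hinc : ∀ a ∈ K, ∀ b ∈ K, a ≠ b → ¬ a ≤ b := fun a ha b hb hab =>
      not_le_of_rank_eq hr ((hrank0 a ha).trans (hrank0 b hb).symm) hab
    exact hxy (conn_eq_of_antichain hcK hinc x (maxSet_subset _ hx) y (maxSet_subset _ hy))
  have hAanti := antichain_level hr (P := P) (r := r) (n := n) (k - 1)
  have hJanti := antichain_maxSet (P := P) J
  have hKanti := antichain_maxSet (P := P) K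
  have hAne : (level P r (k - 1)).Nonempty := level_nonempty hr (by omega)
  have hrA : ∀ a ∈ level P r (k - 1), r a = k - 1 := fun a ha => mem_level.mp ha
  -- pairwise distinct
  have hdAB : level P r (k - 1) ≠ maxSet P J := by
    intro h
    have : u ∈ level P r (k - 1) := h ▸ huJset
    have := mem_level.mp this
    omega
  have hdAC : level P r (k - 1) ≠ maxSet P K := by
    intro h
    obtain ⟨c, hc⟩ := hmaxKne
    have : c ∈ level P r (k - 1) := h ▸ hc
    have h1 := mem_level.mp this
    have h2 := hrC c hc
    omega
  have hdBC : maxSet P J ≠ maxSet P K := by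
    intro h
    rw [h] at hmaxJ
    omega
  -- edge between level (k-1) and maxSet K in the chain polytope
  have hltAC : ∀ a ∈ level P r (k - 1), ∀ c ∈ maxSet P K, a < c := by
    intro a ha c hc
    exact lt_of_rank_lt hr (by rw [hrA a ha, hrC c hc]; omega)
  have hedge : IsEdgeOf P (chainPolytope P) (rho P (level P r (k - 1))) (rho P (maxSet P K)) :=
    ⟨fun h => hdAC (rho_inj h), edge_exposed hr hAne hmaxKne hAanti hKanti hltAC⟩
  -- the pair is in EstarC
  have hLideal : IsIdealF P (univ.filter (fun x => r x ≤ k - 1)) := by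
    intro x y hx hyx
    simp only [Finset.mem_filter, Finset.mem_univ, true_and] at hx ⊢
    exact le_trans (rank_mono hr hyx) hx
  have hnotO : ¬ IsEdgeOf P (orderPolytope P) (rho P (genIdeal P (level P r (k - 1))))
      (rho P (genIdeal P (maxSet P K))) := by
    rw [genIdeal_level hr (by omega : k - 1 ≤ n), genIdeal_maxSet hK]
    obtain ⟨c₁, hc₁, c₂, hc₂, hc₁₂⟩ := Finset.one_lt_card.mp (by omega : 1 < (maxSet P K).card)
    have hnotL : ∀ c ∈ maxSet P K, c ∉ univ.filter (fun x => r x ≤ k - 1) := by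
      intro c hc hmem
      simp only [Finset.mem_filter, Finset.mem_univ, true_and] at hmem
      have := hrC c hc
      omega
    refine not_edge_orderPolytope hLideal hK hc₁₂ (maxSet_subset _ hc₁) (maxSet_subset _ hc₂)
      (hnotL c₁ hc₁) (hnotL c₂ hc₂) ?_ ?_ ?_
    · intro x hx
      simp only [Finset.mem_filter, Finset.mem_univ, true_and] at hx
      exact (hKiff x).mpr (Or.inl (by omega))
    · intro y hy
      simp only [Finset.mem_filter, Finset.mem_univ, true_and]
      have : r y < r c₁ := (hr.2.2 y c₁).mp hy
      have := hrC c₁ hc₁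
      omega
    · intro y hy
      exact (Finset.mem_filter.mp hc₁).2 y hy
  have hEstar : EstarC P (level P r (k - 1)) (maxSet P K) :=
    ⟨hAanti, hKanti, hdAC, hedge, hnotO⟩
  -- triangular face
  have htri : IsExposed ℝ (chainPolytope P)
      (convexHull ℝ {rho P (level P r (k - 1)), rho P (maxSet P J), rho P (maxSet P K)}) := by
    rcases (by omega : j = k ∨ j + 2 ≤ k) with hcase | hcase
    · -- j = k : maxSet K = {u, v}
      have huK : u ∈ K := hJK huJ
      have huC : u ∈ maxSet P K := by
        rcases (hKiff u).mp huK with h | h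
        · omega
        · exact h
      have hKJstruct : ∀ x ∈ K \ J, x ∈ maxSet P K ∧ x ≠ u := by
        intro x hx
        rw [Finset.mem_sdiff] at hx
        have hxnJ := hx.2
        have hxne : x ≠ u := by rintro rfl; exact hxnJ huJ
        rcases (hKiff x).mp hx.1 with h | h
        · exact absurd ((hJiff x).mpr (Or.inl (by omega))) hxnJ
        · exact ⟨h, hxne⟩
      have hincKJ : ∀ a ∈ K \ J, ∀ b ∈ K \ J, a ≠ b → ¬ a ≤ b := by
        intro a ha b hb hab
        have h1 := hrC a (hKJstruct a ha).1
        have h2 := hrC b (hKJstruct b hb).1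
        exact not_le_of_rank_eq hr (h1.trans h2.symm) hab
      obtain ⟨⟨v, hv⟩⟩ := hcKJ.nonempty
      have hvKJ : v ∈ K \ J := Finset.mem_coe.mp hv
      have hall : ∀ x ∈ K \ J, x = v := fun x hx =>
        conn_eq_of_antichain hcKJ hincKJ x hx v hvKJ
      have hvC : v ∈ maxSet P K := (hKJstruct v hvKJ).1
      have hvu : v ≠ u := (hKJstruct v hvKJ).2
      have hCuv : maxSet P K = {u, v} := by
        ext c
        simp only [Finset.mem_insert, Finset.mem_singleton]
        constructor
        · intro hc
          by_cases hcu : c = u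
          · exact Or.inl hcu
          · refine Or.inr (hall c ?_)
            rw [Finset.mem_sdiff]
            refine ⟨maxSet_subset _ hc, fun hcJ => ?_⟩
            rcases (hJiff c).mp hcJ with h | h
            · have := hrC c hc; omega
            · rw [hu, Finset.mem_singleton] at h
              exact hcu h
        · rintro (rfl | rfl)
          · exact huC
          · exact hvC
      have hruv : r u = k := by omega
      have hrv : r v = k := hrC v hvC
      have hnuv : u ≠ v := Ne.symm hvu
      have hle1 : ¬ u ≤ v := not_le_of_rank_eq hr (by omega) hnuv
      have hle2 : ¬ v ≤ u := not_le_of_rank_eq hr (by omega) hnuv.symm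
      have hau : ∀ a ∈ level P r (k - 1), a < u := fun a ha =>
        lt_of_rank_lt hr (by rw [hrA a ha]; omega)
      have hav : ∀ a ∈ level P r (k - 1), a < v := fun a ha =>
        lt_of_rank_lt hr (by rw [hrA a ha]; omega)
      have := tri_exposed2 hr hAne hAanti hnuv hle1 hle2 hau hav
      rwa [← hu, ← hCuv] at this
    · -- j + 2 ≤ k
      have hua : ∀ a ∈ level P r (k - 1), u < a := fun a ha =>
        lt_of_rank_lt hr (by rw [hrA a ha]; omega)
      have := tri_exposed1 hr hAne hmaxKne hAanti hKanti hua hltAC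
      rwa [← hu] at this
  refine ⟨hk1, hAanti, hJanti, hKanti, hdAB, hdAC, hdBC, ?_, ?_⟩
  · exact ⟨level P r (k - 1), maxSet P J, maxSet P K, rfl, hdAB, hdAC, hdBC,
      hAanti, hJanti, hKanti,
      fun h => hdAB (rho_inj h), fun h => hdAC (rho_inj h), fun h => hdBC (rho_inj h), htri⟩
  · exact ⟨level P r (k - 1), by simp, maxSet P K, by simp, hdAC, hEstar⟩
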